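/- arXiv:2404.19512 — 3 statements merged into one kernel-verified Lean document; each statement's English description precedes it below -/
import Mathlib

section
/- Let Δx > 0 and let W : ℝ → ℝ be a polynomial of degree at most 4. For the interface point x_{i+1/2} and the uniform cells I_k = [x_{i+1/2} + (k−i−1)Δx, x_{i+1/2} + (k−i)Δx], define the cell averages W_k = (1/Δx)∫_{I_k} W(x) dx for k = i−1, i, i+1, i+2, and let W_0 = W(x_{i+1/2}) be the interface point value. Then the second derivative at the interface is recovered exactly: W''(x_{i+1/2}) = [−(1/8)(W_{i+2} + W_{i−1}) + (31/8)(W_{i+1} + W_i) − (15/2)W_0]/Δx². -/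
open Polynomial intervalIntegral

/-! Expanding `W` in its five coefficients, each cell average is an explicit integral of
monomials, and the claim becomes a polynomial identity in the coefficients, `X` and `Δx`
once the factor `Δx` of every cell average is cleared. -/

theorem Polynomial.eval_iterate_derivative_eq_sum_range {R : Type*} [CommSemiring R] {p : R[X]}
    {n : ℕ} (hn : p.natDegree < n) (k : ℕ) (x : R) :
    (derivative^[k] p).eval x
      = ∑ i ∈ Finset.range n, p.coeff i * i.descFactorial k * x ^ (i - k) := by
  conv_lhs => rw [p.as_sum_range_C_mul_X_pow' hn]
  simp [iterate_derivative_sum, iterate_derivative_C_mul, iterate_derivative_X_pow_eq_smul,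
    eval_finsetSum, mul_assoc, mul_left_comm]

theorem Polynomial.integral_eval_eq_sum_range {p : ℝ[X]} {n : ℕ} (hn : p.natDegree < n)
    (a b : ℝ) :
    ∫ x in a..b, p.eval x
      = ∑ i ∈ Finset.range n, p.coeff i * ((b ^ (i + 1) - a ^ (i + 1)) / (i + 1)) := by
  simp_rw [eval_eq_sum_range' hn]
  rw [integral_finsetSum fun i _ => (intervalIntegrable_pow i).const_mul _]
  simp [integral_pow]

/-- For a polynomial `W` of degree at most 4 on uniform cells, the second derivative
at the interface `x_{i+1/2}` is recovered exactly from the interface point value `W₀`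
and the four adjacent cell averages:
`W''(x_{i+1/2}) = [−(1/8)(W_{i+2} + W_{i−1}) + (31/8)(W_{i+1} + W_i) − (15/2)W₀]/Δx²`. -/
theorem interface_second_derivative_from_cell_averages
    (Δx X : ℝ) (hΔx : 0 < Δx)
    (W : Polynomial ℝ) (hW : W.natDegree ≤ 4)
    (Wm1 Wi Wp1 Wp2 W0 : ℝ)
    (hWm1 : Wm1 = (1 / Δx) * ∫ x in (X - 2 * Δx)..(X - Δx), W.eval x)
    (hWi : Wi = (1 / Δx) * ∫ x in (X - Δx)..X, W.eval x)
    (hWp1 : Wp1 = (1 / Δx) * ∫ x in X..(X + Δx), W.eval x)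
    (hWp2 : Wp2 = (1 / Δx) * ∫ x in (X + Δx)..(X + 2 * Δx), W.eval x)
    (hW0 : W0 = W.eval X) :
    (Polynomial.derivative (Polynomial.derivative W)).eval X
      = (-(1 / 8) * (Wp2 + Wm1) + (31 / 8) * (Wp1 + Wi) - (15 / 2) * W0) / Δx ^ 2 := by
  have hW5 : W.natDegree < 5 := by omega
  have hW'' : (derivative (derivative W)).eval X
      = ∑ i ∈ Finset.range 5, W.coeff i * i.descFactorial 2 * X ^ (i - 2) :=
    eval_iterate_derivative_eq_sum_range hW5 2 X
  simp only [integral_eval_eq_sum_range hW5] at hWm1 hWi hWp1 hWp2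
  rw [eval_eq_sum_range' hW5] at hW0
  subst hWm1 hWi hWp1 hWp2 hW0
  rw [hW'']
  simp only [Finset.sum_range_succ, Finset.sum_range_zero]
  norm_num [Nat.descFactorial]
  field_simp
  ring
end

section
/- Let L : ℝ^d → ℝ^d be four times continuously differentiable, let w : ℝ → ℝ^d solve the autonomous ODE w'(t) = L(w(t)) with w(0) = w_0. For Δt > 0 define the intermediate state w*(Δt) = w_0 + (Δt/2)L(w_0) + (Δt²/8)·DL(w_0)(L(w_0)) and the update w⁺(Δt) = w_0 + Δt·L(w_0) + (Δt²/6)·DL(w_0)(L(w_0)) + (Δt²/3)·DL(w*(Δt))(L(w*(Δt))), where DL(w) denotes the Fréchet derivative of L at w. Then the one-step error satisfies ‖w⁺(Δt) − w(Δt)‖ = O(Δt⁵) as Δt → 0⁺; i.e., the two-stage method is fourth-order accurate. -/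
/-!
The exact solution satisfies `w' = L ∘ w` and `w'' = P ∘ w` with `P u = DL(u)(L u)`, so the
update is `w₀ + Δt w'(0) + (Δt²/6) w''(0) + (Δt²/3) P(w*)`. With `w''(Δt/2)` in place of
`P(w*)` this is a quadrature that is exact on quartics, hence off by `O(Δt⁵)` for the `C⁵`
solution. The intermediate state `w*` is the second-order Taylor polynomial of `w` at `Δt/2`,
so `w* - w(Δt/2) = O(Δt³)`; as `P` is `C¹`, also `P(w*) - w''(Δt/2) = O(Δt³)`, and the
weight `Δt²/3` turns this into `O(Δt⁵)`.
-/

open Asymptotics Filter Topology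

section

open Finset
open scoped Nat

variable {E : Type*} [NormedAddCommGroup E] [NormedSpace ℝ E]

theorem taylor_isBigO_univ {f : ℝ → E} {n : ℕ} (hf : ContDiff ℝ (n + 1) f) (x₀ : ℝ) :
    (fun x ↦ f x - ∑ k ∈ range (n + 1), ((x - x₀) ^ k / k !) • iteratedDeriv k f x₀)
      =O[𝓝 x₀] fun x ↦ (x - x₀) ^ (n + 1) := by
  have hlast : (fun x ↦ (((n + 1)! : ℝ)⁻¹ * (x - x₀) ^ (n + 1)) • iteratedDeriv (n + 1) f x₀)
      =O[𝓝 x₀] fun x ↦ (x - x₀) ^ (n + 1) :=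
    ((isBigO_refl _ _).const_mul_left _).smul (isBigO_const_const _ one_ne_zero _) |>.congr_right
      fun x ↦ by simp
  refine ((taylor_isLittleO_univ (x₀ := x₀) (by exact_mod_cast hf)).isBigO.add hlast).congr_left
    fun x ↦ ?_
  simp only [taylor_within_apply, iteratedDerivWithin_univ, sum_range_succ _ (n + 1),
    div_eq_inv_mul]
  abel

theorem Asymptotics.IsBigO.comp_const_mul_pow {F : Type*} [Norm F] {f : ℝ → F} {n : ℕ}
    (hf : f =O[𝓝 0] fun x ↦ x ^ n) (c : ℝ) : (fun t ↦ f (c * t)) =O[𝓝 0] fun t ↦ t ^ n := by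
  refine (hf.comp_tendsto ((continuous_const_mul c).tendsto' 0 0 (mul_zero c))).trans ?_
  simpa [Function.comp_def, mul_pow] using
    (isBigO_refl (fun t : ℝ ↦ t ^ n) _).const_mul_left (c ^ n)

theorem Asymptotics.IsBigO.pow_div_const_smul {α : Type*} {l : Filter α} {x : α → ℝ} {f : α → E}
    {n : ℕ} (hf : f =O[l] fun a ↦ x a ^ n) (m : ℕ) (c : ℝ) :
    (fun a ↦ (x a ^ m / c) • f a) =O[l] fun a ↦ x a ^ (m + n) :=
  ((isBigO_const_mul_self c⁻¹ (fun a ↦ x a ^ m) l).congr_left fun a ↦ by ring).smul hf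
    |>.congr_right fun a ↦ by rw [smul_eq_mul, pow_add]

theorem ContDiffAt.isBigO_comp_sub_comp {F G α : Type*} [NormedAddCommGroup F] [NormedSpace ℝ F]
    [Norm G] {P : E → F} {x₀ : E} (hP : ContDiffAt ℝ 1 P x₀) {l : Filter α}
    {u v : α → E} {g : α → G} (hu : Tendsto u l (𝓝 x₀)) (hv : Tendsto v l (𝓝 x₀))
    (huv : (fun a ↦ u a - v a) =O[l] g) : (fun a ↦ P (u a) - P (v a)) =O[l] g :=
  ((hP.hasStrictFDerivAt one_ne_zero).isBigO_sub.comp_tendsto (hu.prodMk_nhds hv)).trans huv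

/-- The quadrature behind the two-stage scheme; it is exact for quartic `f`. -/
theorem ContDiff.isBigO_two_derivative_rule {f : ℝ → E} (hf : ContDiff ℝ 5 f) :
    (fun t ↦ f 0 + t • deriv f 0 + (t ^ 2 / 6) • deriv (deriv f) 0
        + (t ^ 2 / 3) • deriv (deriv f) (2⁻¹ * t) - f t) =O[𝓝 0] fun t ↦ t ^ 5 := by
  have hf_4 := taylor_isBigO_univ (n := 4) hf 0
  have hf''_2 := taylor_isBigO_univ (n := 2) (hf.iterate_deriv' 3 2) 0
  simp only [sub_zero] at hf_4 hf''_2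
  refine ((hf''_2.comp_const_mul_pow 2⁻¹).pow_div_const_smul 2 3 |>.sub hf_4).congr_left
    fun t ↦ ?_
  simp only [Function.iterate_succ_apply, Function.iterate_zero_apply,
    sum_range_succ, sum_range_zero, iteratedDeriv_zero, iteratedDeriv_succ]
  module

theorem contDiff_succ_of_hasDerivAt_comp {L : E → E} {w : ℝ → E} {n : ℕ}
    (hL : ContDiff ℝ n L) (hw : ∀ t, HasDerivAt w (L (w t)) t) : ContDiff ℝ (n + 1) w := by
  have hderiv : deriv w = L ∘ w := funext fun t ↦ (hw t).deriv
  have hdiff : Differentiable ℝ w := fun t ↦ (hw t).differentiableAt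
  induction n with
  | zero => exact contDiff_one_iff_deriv.2 ⟨hdiff, hderiv ▸ hL.continuous.comp hdiff.continuous⟩
  | succ n ih =>
    refine contDiff_succ_iff_deriv.2 ⟨hdiff, by simp, hderiv ▸ hL.comp (ih (hL.of_le ?_))⟩
    exact_mod_cast n.le_succ

theorem deriv_deriv_eq_fderiv_apply {L : E → E} {w : ℝ → E} (hL : Differentiable ℝ L)
    (hw : ∀ t, HasDerivAt w (L (w t)) t) (t : ℝ) :
    deriv (deriv w) t = fderiv ℝ L (w t) (L (w t)) := by
  rw [show deriv w = L ∘ w from funext fun t ↦ (hw t).deriv]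
  exact ((hL (w t)).hasFDerivAt.comp_hasDerivAt t (hw t)).deriv

theorem isBigO_taylor_two_sub_solution_half {L : E → E} {w : ℝ → E} (hL : ContDiff ℝ 2 L)
    (hw : ∀ t, HasDerivAt w (L (w t)) t) :
    (fun t ↦ w 0 + (t / 2) • L (w 0) + (t ^ 2 / 8) • fderiv ℝ L (w 0) (L (w 0)) - w (2⁻¹ * t))
      =O[𝓝 0] fun t ↦ t ^ 3 := by
  have hw_2 := taylor_isBigO_univ (n := 2) (contDiff_succ_of_hasDerivAt_comp hL hw) 0
  simp only [sub_zero] at hw_2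
  refine (hw_2.comp_const_mul_pow 2⁻¹).neg_left.congr_left fun t ↦ ?_
  simp only [sum_range_succ, sum_range_zero, iteratedDeriv_zero, iteratedDeriv_succ, (hw 0).deriv,
    deriv_deriv_eq_fderiv_apply (hL.differentiable two_ne_zero) hw]
  module

end

/-- The two-stage fourth-order temporal discretization
`w* = w₀ + (Δt/2)L(w₀) + (Δt²/8)DL(w₀)(L(w₀))`,
`w⁺ = w₀ + Δt L(w₀) + (Δt²/6)DL(w₀)(L(w₀)) + (Δt²/3)DL(w*)(L(w*))`
has one-step error `O(Δt⁵)` for the autonomous ODE `w' = L(w)`. -/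
theorem two_stage_fourth_order_one_step_error
    (d : ℕ) (L : (Fin d → ℝ) → (Fin d → ℝ)) (hL : ContDiff ℝ 4 L)
    (w0 : Fin d → ℝ) (w : ℝ → (Fin d → ℝ))
    (hw : ∀ t, HasDerivAt w (L (w t)) t) (hw0 : w 0 = w0)
    (wstar wplus : ℝ → (Fin d → ℝ))
    (hwstar : ∀ Δt : ℝ,
      wstar Δt = w0 + (Δt / 2) • L w0 + (Δt ^ 2 / 8) • fderiv ℝ L w0 (L w0))
    (hwplus : ∀ Δt : ℝ,
      wplus Δt = w0 + Δt • L w0 + (Δt ^ 2 / 6) • fderiv ℝ L w0 (L w0)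
        + (Δt ^ 2 / 3) • fderiv ℝ L (wstar Δt) (L (wstar Δt))) :
    (fun Δt : ℝ => ‖wplus Δt - w Δt‖) =O[𝓝[>] (0 : ℝ)] fun Δt : ℝ => Δt ^ 5 := by
  set P : (Fin d → ℝ) → (Fin d → ℝ) := fun u ↦ fderiv ℝ L u (L u)
  have hP : ContDiff ℝ 1 P := (hL.fderiv_right (by norm_num)).clm_apply (hL.of_le (by norm_num))
  have hw5 : ContDiff ℝ 5 w := contDiff_succ_of_hasDerivAt_comp hL hw
  have hw'' : ∀ t, deriv (deriv w) t = P (w t) :=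
    deriv_deriv_eq_fderiv_apply (hL.differentiable (by norm_num)) hw
  have hwstar_lim : Tendsto wstar (𝓝 0) (𝓝 w0) := by
    rw [show wstar = _ from funext hwstar]
    exact (by fun_prop : Continuous fun t : ℝ ↦
      w0 + (t / 2) • L w0 + (t ^ 2 / 8) • fderiv ℝ L w0 (L w0)).tendsto' 0 w0 (by simp)
  have hw_half_lim : Tendsto (fun t ↦ w (2⁻¹ * t)) (𝓝 0) (𝓝 w0) :=
    hw0 ▸ (hw5.continuous.tendsto 0).comp ((continuous_const_mul _).tendsto' 0 0 (mul_zero _))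
  have hstage : (fun t ↦ P (wstar t) - P (w (2⁻¹ * t))) =O[𝓝 0] fun t ↦ t ^ 3 :=
    hP.contDiffAt.isBigO_comp_sub_comp hwstar_lim hw_half_lim <|
      (isBigO_taylor_two_sub_solution_half (hL.of_le (by norm_num)) hw).congr_left fun t ↦ by
        rw [hwstar, hw0]
  have herror : (fun t ↦ wplus t - w t) =O[𝓝 0] fun t ↦ t ^ 5 := by
    refine (hw5.isBigO_two_derivative_rule.add (hstage.pow_div_const_smul 2 3)).congr_left
      fun t ↦ ?_
    rw [hwplus, hw'', hw'', (hw 0).deriv, hw0]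
    module
  exact herror.norm_left.mono nhdsWithin_le_nhds
end

section
/- Let V be a real vector space, N : V → ℝ a convex function that is positively homogeneous (N(αv) = αN(v) for α ≥ 0) and subadditive (N(v+w) ≤ N(v)+N(w)), i.e., a sublinear functional such as a seminorm or total variation. Let L : V → V and Δt > 0 be such that the forward Euler step does not increase N: N(v + Δt·L(v)) ≤ N(v) for all v ∈ V. Then the third-order TVD Runge–Kutta update u^{(1)} = u + Δt·L(u), u^{(2)} = (3/4)u + (1/4)u^{(1)} + (1/4)Δt·L(u^{(1)}), u⁺ = (1/3)u + (2/3)u^{(2)} + (2/3)Δt·L(u^{(2)}) also satisfies N(u⁺) ≤ N(u) for all u ∈ V. -/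
/-- Strong stability of the third-order TVD Runge–Kutta method: if a sublinear
functional `N` (positively homogeneous and subadditive, e.g. a seminorm or total
variation) is not increased by the forward Euler step `v ↦ v + Δt L(v)`, then it is
not increased by the third-order TVD Runge–Kutta update either. -/
theorem tvd_rk3_strong_stability
    (V : Type*) [AddCommGroup V] [Module ℝ V]
    (N : V → ℝ)
    (hN_hom : ∀ (α : ℝ) (v : V), 0 ≤ α → N (α • v) = α * N v)
    (hN_sub : ∀ v w : V, N (v + w) ≤ N v + N w)
    (L : V → V) (Δt : ℝ) (hΔt : 0 < Δt)
    (hEuler : ∀ v : V, N (v + Δt • L v) ≤ N v) :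
    ∀ u : V,
      let u1 := u + Δt • L u
      let u2 := (3 / 4 : ℝ) • u + (1 / 4 : ℝ) • u1 + ((1 / 4 : ℝ) * Δt) • L u1
      let uplus := (1 / 3 : ℝ) • u + (2 / 3 : ℝ) • u2 + ((2 / 3 : ℝ) * Δt) • L u2
      N uplus ≤ N u := by
  intro u u1 u2 uplus
  -- key: convex combination of a point and an Euler step
  have key : ∀ (a b : ℝ) (v w : V), 0 ≤ a → 0 ≤ b →
      N (a • v + b • w + (b * Δt) • L w) ≤ a * N v + b * N w := by
    intro a b v w ha hb
    have h1 : a • v + b • w + (b * Δt) • L w = a • v + b • (w + Δt • L w) := by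
      rw [smul_add, mul_smul, add_assoc]
    rw [h1]
    calc N (a • v + b • (w + Δt • L w))
        ≤ N (a • v) + N (b • (w + Δt • L w)) := hN_sub _ _
      _ = a * N v + b * N (w + Δt • L w) := by
          rw [hN_hom a v ha, hN_hom b _ hb]
      _ ≤ a * N v + b * N w := by
          have := hEuler w
          nlinarith [hEuler w]
  have h1 : N u1 ≤ N u := hEuler u
  have h2 : N u2 ≤ (3/4) * N u + (1/4) * N u1 := key (3/4) (1/4) u u1 (by norm_num) (by norm_num)
  have h3 : N uplus ≤ (1/3) * N u + (2/3) * N u2 := key (1/3) (2/3) u u2 (by norm_num) (by norm_num)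
  nlinarith
end
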